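/- Let ω ∈ ℝ with ω ≠ 0 and σ : ℕ → ℝ. Define infinite matrices C, M : ℕ × ℕ → ℂ by C_{j,j} = −iω + σ_j/2, C_{j,j−1} = σ_{j−1}/2 for j ≥ 1, and C_{j,k} = 0 otherwise; and M_{j,k} = (2(−1)^{j+k}/(−2iω + σ_j)) Π_{l=k}^{j−1} (σ_l/(−2iω + σ_l)) for k ≤ j (empty product equal to 1 for k = j) and M_{j,k} = 0 for k > j (all the denominators −2iω + σ_l are nonzero since ω ≠ 0 is real and σ_l is real). Then M is a two-sided inverse of C: for all j, m ∈ ℕ, Σ_k C_{j,k} M_{k,m} = δ_{j,m} and Σ_k M_{j,k} C_{k,m} = δ_{j,m}, where both sums have finitely many nonzero terms and δ is the Kronecker delta. -/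

import Mathlib

/-- The lower-bidiagonal operator `C₁`: `C_{j,j} = −iω + σ_j/2`,
`C_{j,j−1} = σ_{j−1}/2` for `j ≥ 1`, all other entries zero. -/
noncomputable def Cmat1 (ω : ℝ) (σ : ℕ → ℝ) (j k : ℕ) : ℂ :=
  if k = j then -(Complex.I * (ω : ℂ)) + (σ j : ℂ) / 2
  else if j = k + 1 then (σ k : ℂ) / 2
  else 0

/-- The lower-triangular operator `M₁` with entries
`M_{j,k} = (2(−1)^{j+k}/(−2iω + σ_j)) Π_{l=k}^{j−1} (σ_l/(−2iω + σ_l))` for `k ≤ j`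
(empty product equal to `1` for `k = j`), and `0` for `k > j`. -/
noncomputable def Mmat1 (ω : ℝ) (σ : ℕ → ℝ) (j k : ℕ) : ℂ :=
  if k ≤ j then
    (2 * (-1 : ℂ) ^ (j + k) / (-(2 * Complex.I * (ω : ℂ)) + (σ j : ℂ))) *
      ∏ l ∈ Finset.Ico k j, ((σ l : ℂ) / (-(2 * Complex.I * (ω : ℂ)) + (σ l : ℂ)))
  else 0

/-!
`C` is lower bidiagonal with `C_{j,j} = d_j / 2` and `C_{j+1,j} = σ_j / 2`, where
`d_l = −2iω + σ_l` has imaginary part `−2ω ≠ 0`, and `M` is lower triangular with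
`M_{j,j} = 2 / d_j`, so the diagonal entries of both products are `1`. Off the diagonal each
product has only two terms, and they cancel because the product formula for `M` gives the
two-term recursions `d_{j+1} M_{j+1,m} = −σ_j M_{j,m}` down columns and
`M_{j,m} d_m = −σ_m M_{j,m+1}` along rows.
-/

section
variable (ω : ℝ) (σ : ℕ → ℝ)

noncomputable abbrev Mmat1Denom (l : ℕ) : ℂ := -(2 * Complex.I * ω) + σ l

variable {ω} in
theorem Mmat1Denom_ne_zero (hω : ω ≠ 0) (l : ℕ) : Mmat1Denom ω σ l ≠ 0 := by
  intro h
  simpa [hω] using congrArg Complex.im h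

theorem Cmat1_self (j : ℕ) : Cmat1 ω σ j j = Mmat1Denom ω σ j / 2 := by
  rw [Cmat1, if_pos rfl]
  ring

theorem Cmat1_succ_left (k : ℕ) : Cmat1 ω σ (k + 1) k = σ k / 2 := by
  simp [Cmat1]

theorem Cmat1_eq_zero {j k : ℕ} (h₁ : k ≠ j) (h₂ : j ≠ k + 1) : Cmat1 ω σ j k = 0 := by
  simp [Cmat1, h₁, h₂]

theorem Mmat1_self (j : ℕ) : Mmat1 ω σ j j = 2 / Mmat1Denom ω σ j := by
  simp [Mmat1, Even.neg_one_pow ⟨j, rfl⟩]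

theorem Mmat1_of_lt {j k : ℕ} (h : j < k) : Mmat1 ω σ j k = 0 :=
  if_neg h.not_ge

variable {ω}

theorem Mmat1Denom_mul_Mmat1_succ_left (hω : ω ≠ 0) {j m : ℕ} (h : m ≤ j) :
    Mmat1Denom ω σ (j + 1) * Mmat1 ω σ (j + 1) m = -(σ j * Mmat1 ω σ j m) := by
  simp only [Mmat1, if_pos h, if_pos (h.trans j.le_succ), Finset.prod_Ico_succ_top h,
    show j + 1 + m = j + m + 1 by ring, pow_succ]
  field_simp [Mmat1Denom_ne_zero σ hω j, Mmat1Denom_ne_zero σ hω (j + 1)]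

theorem Mmat1_mul_Mmat1Denom (hω : ω ≠ 0) {j m : ℕ} (h : m < j) :
    Mmat1 ω σ j m * Mmat1Denom ω σ m = -(σ m * Mmat1 ω σ j (m + 1)) := by
  rw [Mmat1, Mmat1, if_pos h.le, if_pos (Nat.succ_le_of_lt h),
    Finset.prod_eq_prod_Ico_succ_bot h, show j + (m + 1) = j + m + 1 by ring, pow_succ]
  field_simp [Mmat1Denom_ne_zero σ hω j, Mmat1Denom_ne_zero σ hω m]

variable (ω) in
theorem tsum_Cmat1_zero_mul (f : ℕ → ℂ) :
    ∑' k, Cmat1 ω σ 0 k * f k = Mmat1Denom ω σ 0 / 2 * f 0 := by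
  rw [tsum_eq_single 0 fun k hk => by rw [Cmat1_eq_zero ω σ hk k.succ_ne_zero.symm, zero_mul],
    Cmat1_self]

variable (ω) in
theorem tsum_Cmat1_succ_mul (j : ℕ) (f : ℕ → ℂ) :
    ∑' k, Cmat1 ω σ (j + 1) k * f k =
      σ j / 2 * f j + Mmat1Denom ω σ (j + 1) / 2 * f (j + 1) := by
  rw [tsum_eq_sum (s := {j, j + 1}), Finset.sum_pair j.succ_ne_self.symm, Cmat1_succ_left,
    Cmat1_self]
  intro k hk
  simp only [Finset.mem_insert, Finset.mem_singleton, not_or] at hk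
  rw [Cmat1_eq_zero ω σ hk.2 (by omega), zero_mul]

variable (ω) in
theorem tsum_mul_Cmat1 (m : ℕ) (f : ℕ → ℂ) :
    ∑' k, f k * Cmat1 ω σ k m = f m * (Mmat1Denom ω σ m / 2) + f (m + 1) * (σ m / 2) := by
  rw [tsum_eq_sum (s := {m, m + 1}), Finset.sum_pair m.succ_ne_self.symm, Cmat1_succ_left,
    Cmat1_self]
  intro k hk
  simp only [Finset.mem_insert, Finset.mem_singleton, not_or] at hk
  rw [Cmat1_eq_zero ω σ (Ne.symm hk.1) hk.2, mul_zero]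

theorem tsum_Cmat1_mul_Mmat1 (hω : ω ≠ 0) (j m : ℕ) :
    ∑' k, Cmat1 ω σ j k * Mmat1 ω σ k m = if j = m then 1 else 0 := by
  have hd := Mmat1Denom_ne_zero σ hω
  cases j with
  | zero =>
    rw [tsum_Cmat1_zero_mul]
    rcases Nat.eq_zero_or_pos m with rfl | hm
    · rw [Mmat1_self, if_pos rfl]
      field_simp [hd 0]
    · rw [Mmat1_of_lt ω σ hm, if_neg hm.ne, mul_zero]
  | succ j =>
    rw [tsum_Cmat1_succ_mul]
    rcases lt_trichotomy m (j + 1) with hm | rfl | hm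
    · rw [if_neg hm.ne']
      linear_combination Mmat1Denom_mul_Mmat1_succ_left σ hω (Nat.le_of_lt_succ hm) / 2
    · rw [Mmat1_of_lt ω σ j.lt_succ_self, Mmat1_self, if_pos rfl, mul_zero, zero_add]
      field_simp [hd (j + 1)]
    · rw [Mmat1_of_lt ω σ (j.lt_succ_self.trans hm), Mmat1_of_lt ω σ hm, if_neg hm.ne,
        mul_zero, mul_zero, add_zero]

theorem tsum_Mmat1_mul_Cmat1 (hω : ω ≠ 0) (j m : ℕ) :
    ∑' k, Mmat1 ω σ j k * Cmat1 ω σ k m = if j = m then 1 else 0 := by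
  rw [tsum_mul_Cmat1]
  rcases lt_trichotomy m j with hm | rfl | hm
  · rw [if_neg hm.ne']
    linear_combination Mmat1_mul_Mmat1Denom σ hω hm / 2
  · rw [Mmat1_of_lt ω σ m.lt_succ_self, Mmat1_self, if_pos rfl, zero_mul, add_zero]
    field_simp [Mmat1Denom_ne_zero σ hω m]
  · rw [Mmat1_of_lt ω σ hm, Mmat1_of_lt ω σ (hm.trans m.lt_succ_self), if_neg hm.ne,
      zero_mul, zero_mul, add_zero]

end

/-- `M₁` is a two-sided inverse of `C₁`. The sums over `k` have finitely
many nonzero terms, so they are expressed as `tsum`s. -/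
theorem stmt16 (ω : ℝ) (hω : ω ≠ 0) (σ : ℕ → ℝ) :
    (∀ j m : ℕ, ∑' k : ℕ, Cmat1 ω σ j k * Mmat1 ω σ k m =
      if j = m then 1 else 0) ∧
    (∀ j m : ℕ, ∑' k : ℕ, Mmat1 ω σ j k * Cmat1 ω σ k m =
      if j = m then 1 else 0) :=
  ⟨tsum_Cmat1_mul_Mmat1 σ hω, tsum_Mmat1_mul_Cmat1 σ hω⟩
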